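/- On ℝ⁸ with coordinates (x, t, u, p, q, r, s, w) (standing for x, λ, u, u_x, u_y, u_xx, u_xy, u_yy), define e₁ = −(∂_x + p∂_u + r∂_p + s∂_q + t∂_r + (t²/2)∂_s + (t³/3)∂_w), e₁' = ∂_t, e₂ = ∂_r + t∂_s + t²∂_w, e₃ = ∂_p + t∂_q, e₃' = ∂_s + 2t∂_w, e₄ = ∂_u, e₄' = ∂_q, e₄'' = 2∂_w. Then these eight vector fields satisfy [e₁,e₁'] = e₂, [e₁,e₂] = e₃, [e₁',e₂] = e₃', [e₁,e₃] = e₄, [e₁,e₃'] = [e₁',e₃] = e₄', [e₁',e₃'] = e₄'', and [e₁,e₄] = [e₁,e₄'] = [e₁,e₄''] = [e₁',e₄] = [e₁',e₄'] = [e₁',e₄''] = [e₂,e₃] = 0, and they are pointwise linearly independent. -/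

import Mathlib

/-- Lie bracket of vector fields on ℝⁿ. -/
noncomputable def lie {n : ℕ} (X Y : (Fin n → ℝ) → (Fin n → ℝ)) :
    (Fin n → ℝ) → (Fin n → ℝ) :=
  fun p => fderiv ℝ Y p (X p) - fderiv ℝ X p (Y p)

/- Coordinates on ℝ⁸: (x, t, u, p, q, r, s, w) = (P 0, …, P 7),
standing for (x, λ, u, u_x, u_y, u_xx, u_xy, u_yy). -/
noncomputable def E1 : (Fin 8 → ℝ) → (Fin 8 → ℝ) :=
  fun P => -![1, 0, P 3, P 5, P 6, P 1, (P 1) ^ 2 / 2, (P 1) ^ 3 / 3]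

noncomputable def E1' : (Fin 8 → ℝ) → (Fin 8 → ℝ) := fun _ => ![0, 1, 0, 0, 0, 0, 0, 0]

noncomputable def E2 : (Fin 8 → ℝ) → (Fin 8 → ℝ) :=
  fun P => ![0, 0, 0, 0, 0, 1, P 1, (P 1) ^ 2]

noncomputable def E3 : (Fin 8 → ℝ) → (Fin 8 → ℝ) :=
  fun P => ![0, 0, 0, 1, P 1, 0, 0, 0]

noncomputable def E3' : (Fin 8 → ℝ) → (Fin 8 → ℝ) :=
  fun P => ![0, 0, 0, 0, 0, 0, 1, 2 * P 1]

noncomputable def E4 : (Fin 8 → ℝ) → (Fin 8 → ℝ) := fun _ => ![0, 0, 1, 0, 0, 0, 0, 0]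

noncomputable def E4' : (Fin 8 → ℝ) → (Fin 8 → ℝ) := fun _ => ![0, 0, 0, 0, 1, 0, 0, 0]

noncomputable def E4'' : (Fin 8 → ℝ) → (Fin 8 → ℝ) := fun _ => ![0, 0, 0, 0, 0, 0, 0, 2]

@[fun_prop]
theorem Differentiable.vecCons {𝕜 E F : Type*} [NontriviallyNormedField 𝕜]
    [NormedAddCommGroup E] [NormedSpace 𝕜 E] [NormedAddCommGroup F] [NormedSpace 𝕜 F] {n : ℕ}
    {f : E → F} {g : E → Fin n → F} (hf : Differentiable 𝕜 f) (hg : Differentiable 𝕜 g) :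
    Differentiable 𝕜 fun x => Matrix.vecCons (f x) (g x) :=
  hf.finCons hg

theorem fderiv_apply_apply_eq_deriv {E ι : Type*} [NormedAddCommGroup E] [NormedSpace ℝ E]
    [Fintype ι] {Z : E → ι → ℝ} {p : E} (hZ : DifferentiableAt ℝ Z p) (v : E) (i : ι) :
    fderiv ℝ Z p v i = deriv (fun s : ℝ => Z (p + s • v) i) 0 :=
  (hasDerivAt_pi.1 (hZ.hasFDerivAt.hasLineDerivAt v) i).deriv.symm

theorem lie_apply_eq_deriv {n : ℕ} {X Y : (Fin n → ℝ) → (Fin n → ℝ)} {p : Fin n → ℝ}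
    (hX : DifferentiableAt ℝ X p) (hY : DifferentiableAt ℝ Y p) (i : Fin n) :
    lie X Y p i =
      deriv (fun s : ℝ => Y (p + s • X p) i) 0 - deriv (fun s : ℝ => X (p + s • Y p) i) 0 := by
  rw [← fderiv_apply_apply_eq_deriv hY, ← fderiv_apply_apply_eq_deriv hX]
  rfl

theorem linearIndependent_of_triangular_pivots {R ι m : Type*} [CommRing R] [IsDomain R]
    [Fintype ι] [LinearOrder ι] (v : ι → m → R) (σ : ι → m)
    (h_tri : ∀ i j, j < i → v i (σ j) = 0) (h_diag : ∀ i, v i (σ i) ≠ 0) :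
    LinearIndependent R v := by
  let M : Matrix ι ι R := .of fun i j => v i (σ j)
  have hM : M.det ≠ 0 := by
    rw [Matrix.det_of_isUpperTriangular (M := M) fun i j hji => h_tri i j hji]
    exact Finset.prod_ne_zero_iff.2 fun i _ => h_diag i
  exact .of_comp (LinearMap.funLeft R R σ) (Matrix.linearIndependent_rows_of_det_ne_zero hM)

@[fun_prop] theorem differentiable_E1 : Differentiable ℝ E1 := by unfold E1; fun_prop
@[fun_prop] theorem differentiable_E1' : Differentiable ℝ E1' := by unfold E1'; fun_prop
@[fun_prop] theorem differentiable_E2 : Differentiable ℝ E2 := by unfold E2; fun_prop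
@[fun_prop] theorem differentiable_E3 : Differentiable ℝ E3 := by unfold E3; fun_prop
@[fun_prop] theorem differentiable_E3' : Differentiable ℝ E3' := by unfold E3'; fun_prop
@[fun_prop] theorem differentiable_E4 : Differentiable ℝ E4 := by unfold E4; fun_prop
@[fun_prop] theorem differentiable_E4' : Differentiable ℝ E4' := by unfold E4'; fun_prop
@[fun_prop] theorem differentiable_E4'' : Differentiable ℝ E4'' := by unfold E4''; fun_prop

theorem linearIndependent_frame (P : Fin 8 → ℝ) :
    LinearIndependent ℝ ![E1 P, E1' P, E2 P, E3 P, E3' P, E4 P, E4' P, E4'' P] := by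
  -- pivot coordinates `x, t, r, p, s, u, q, w`: the resulting 8 × 8 minor is upper triangular
  refine linearIndependent_of_triangular_pivots _ ![0, 1, 5, 3, 6, 2, 4, 7] ?_ ?_
  · intro i j hji
    fin_cases i <;> fin_cases j <;> simp_all [E1, E1', E2, E3, E3', E4, E4', E4'']
  · intro i
    fin_cases i <;> simp [E1, E1', E2, E3, E3', E4, E4', E4'']

/-- The weak derived flag of the reduction of the 3E₃ system u_xxx=λ, u_xxy=λ²/2,
u_xyy=λ³/3, u_yyy=λ⁴/4: the bracket relations of the Carnot algebra with reduced
growth vector (2,1,2,3) hold, and the eight fields are pointwise independent. -/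
theorem carnot_frame_3E3 :
    (lie E1 E1' = E2) ∧ (lie E1 E2 = E3) ∧ (lie E1' E2 = E3') ∧
    (lie E1 E3 = E4) ∧ (lie E1 E3' = E4') ∧ (lie E1' E3 = E4') ∧
    (lie E1' E3' = E4'') ∧
    (lie E1 E4 = 0) ∧ (lie E1 E4' = 0) ∧ (lie E1 E4'' = 0) ∧
    (lie E1' E4 = 0) ∧ (lie E1' E4' = 0) ∧ (lie E1' E4'' = 0) ∧
    (lie E2 E3 = 0) ∧
    ∀ P, LinearIndependent ℝ
      ![E1 P, E1' P, E2 P, E3 P, E3' P, E4 P, E4' P, E4'' P] := by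
  refine ⟨?_, ?_, ?_, ?_, ?_, ?_, ?_, ?_, ?_, ?_, ?_, ?_, ?_, ?_, linearIndependent_frame⟩ <;>
  · ext P i
    rw [lie_apply_eq_deriv (by fun_prop) (by fun_prop)]
    fin_cases i <;>
      simp (disch := fun_prop) [E1, E1', E2, E3, E3', E4, E4', E4'', deriv_fun_pow] <;> ring
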